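/- Let β ∈ (0,2), v ∈ C([0,1], L(ℝ^d,ℝ^n)) and w ∈ C^β(ℝ^d) (Schauder-Hölder space). Then the paraproduct π_<(v,w) := Σ_{p≥0} S_{p−1}v · Δ_p w belongs to C^β(ℝ^n) and ‖π_<(v,w)‖_β ≲ ‖v‖_∞ ‖w‖_β. -/

import Mathlib

noncomputable section
open MeasureTheory Set

namespace Sch

/-- dyadic point `t⁰_{pm} = (m-1)/2^p`. -/
def pt0 (p m : ℕ) : ℝ := ((m : ℝ) - 1) / 2 ^ p
/-- dyadic point `t¹_{pm} = (2m-1)/2^{p+1}`. -/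
def pt1 (p m : ℕ) : ℝ := (2 * (m : ℝ) - 1) / 2 ^ (p + 1)
/-- dyadic point `t²_{pm} = m/2^p`. -/
def pt2 (p m : ℕ) : ℝ := (m : ℝ) / 2 ^ p

/-- The rescaled Haar function `χ_{pm} = 2^{p/2} H_{pm}`, with the conventions
`χ_{00} = 1` on `[0,1)` (derivative of `φ_{00}(t) = t`) and `χ_{p0} ≡ 0` for `p ≥ 1`. -/
def chi (p m : ℕ) (t : ℝ) : ℝ :=
  if m = 0 then (if p = 0 ∧ 0 ≤ t ∧ t < 1 then 1 else 0)
  else if pt0 p m ≤ t ∧ t < pt1 p m then (2 : ℝ) ^ p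
  else if pt1 p m ≤ t ∧ t < pt2 p m then -(2 : ℝ) ^ p
  else 0

/-- The rescaled Schauder tent function `φ_{pm} = 2^{p/2} G_{pm} = ∫_0^· χ_{pm}`. -/
def phi (p m : ℕ) (t : ℝ) : ℝ := ∫ s in (0:ℝ)..t, chi p m s

variable {E F G : Type*} [NormedAddCommGroup E] [NormedSpace ℝ E]
  [NormedAddCommGroup F] [NormedSpace ℝ F] [NormedAddCommGroup G] [NormedSpace ℝ G]

/-- The (rescaled) Schauder coefficient `f_{pm} = 2f(t¹_{pm}) - f(t⁰_{pm}) - f(t²_{pm})`,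
with the conventions `f_{00} = f(1) - f(0)` and `f_{p0} = 0` for `p ≥ 1`. -/
def coeff (f : ℝ → E) (p m : ℕ) : E :=
  if m = 0 then (if p = 0 then f 1 - f 0 else 0)
  else f (pt1 p m) + f (pt1 p m) - f (pt0 p m) - f (pt2 p m)

/-- Shifted Schauder blocks: `block f 0 = Δ_{-1} f ≡ f(0)` and `block f (p+1) = Δ_p f`. -/
def block (f : ℝ → E) : ℕ → ℝ → E
  | 0 => fun _ => f 0
  | (p + 1) => fun t => ∑ m ∈ Finset.range (2 ^ p + 1), phi p m t • coeff f p m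

/-- Partial sum `psum f p = S_{p-1} f` (blocks of generations `-1, 0, …, p-1`),
the piecewise linear interpolation of `f` on the dyadic grid of generation `p`. -/
def psum (f : ℝ → E) (p : ℕ) (t : ℝ) : E := ∑ k ∈ Finset.range (p + 1), block f k t

/-- Derivative of the shifted Schauder block. -/
def dblock (f : ℝ → E) : ℕ → ℝ → E
  | 0 => fun _ => 0
  | (p + 1) => fun t => ∑ m ∈ Finset.range (2 ^ p + 1), chi p m t • coeff f p m

/-- Derivative of `psum f p = S_{p-1} f`. -/
def dpsum (f : ℝ → E) (p : ℕ) (t : ℝ) : E := ∑ k ∈ Finset.range (p + 1), dblock f k t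

/-- `CoeffBound γ f K` expresses `‖f‖_γ = sup_{p,m} 2^{pγ} |f_{pm}| ≤ K`
(including the generation-(-1) coefficient `f_{-1,0} = f(0)`). -/
def CoeffBound (γ : ℝ) (f : ℝ → E) (K : ℝ) : Prop :=
  (2 : ℝ) ^ (-γ) * ‖f 0‖ ≤ K ∧
  ∀ p m : ℕ, m ≤ 2 ^ p → (2 : ℝ) ^ (γ * (p : ℝ)) * ‖coeff f p m‖ ≤ K

/-- The Schauder paraproduct `π_<(v,w) = ∑_{p≥0} S_{p-1}v · Δ_p w`. -/
def para (v : ℝ → (E →L[ℝ] F)) (w : ℝ → E) (t : ℝ) : F :=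
  ∑' p : ℕ, (psum v p t) (block w (p + 1) t)

/-- The `p`-th term of the Lévy area: `∫_0^t Δ_p v dS_{p-1}w - ∫_0^t d(S_{p-1}v) Δ_p w`. -/
def leviTerm (v : ℝ → (E →L[ℝ] F)) (w : ℝ → E) (p : ℕ) (t : ℝ) : F :=
  ∫ s in (0:ℝ)..t, ((block v (p + 1) s) (dpsum w p s) - (dpsum v p s) (block w (p + 1) s))

/-- The Lévy area `L(v,w) = ∑_p (∫ Δ_p v dS_{p-1}w - ∫ d(S_{p-1}v) Δ_p w)`. -/
def levi (v : ℝ → (E →L[ℝ] F)) (w : ℝ → E) (t : ℝ) : F := ∑' p : ℕ, leviTerm v w p t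

/-- The symmetric part
`S(v,w) = ∑_{m,n≤1} v_{0m}w_{0n} ∫_0^· φ_{0m} dφ_{0n} + (1/2) ∑_{p≥1} Δ_p v Δ_p w`. -/
def symPart (v : ℝ → (E →L[ℝ] F)) (w : ℝ → E) (t : ℝ) : F :=
  (∑ m ∈ Finset.range 2, ∑ n ∈ Finset.range 2,
      (∫ s in (0:ℝ)..t, phi 0 m s * chi 0 n s) • ((coeff v 0 m) (coeff w 0 n)))
    + (1 / 2 : ℝ) • ∑' p : ℕ, (block v (p + 2) t) (block w (p + 2) t)

/-- The Young integral `I(v, dw) = L(v,w) + S(v,w) + π_<(v,w)`. -/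
def young (v : ℝ → (E →L[ℝ] F)) (w : ℝ → E) (t : ℝ) : F :=
  levi v w t + symPart v w t + para v w t

end Sch

/-!
`S_{q-1} v` interpolates `v`, so it is bounded by `‖v‖_∞`, and the tents of one generation have
disjoint supports, so `‖Δ_q w‖_∞ ≤ 2 ‖w‖_β 2^{-qβ}`: the series converges uniformly (M-test).

A coefficient of generation `p` is a second difference over a dyadic cell of generation `p`. The
terms with `q > p` vanish at its three points. For `q ≤ p`, `S_{q-1} v = a + t b` is affine on the
cell with `‖b‖ ≤ 2^{q+1} ‖v‖_∞`, and the Leibniz rule for second differences splits the coefficient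
into `S_{q-1} v (t¹)` applied to the coefficient of `Δ_q w` (which is `w_{pm}` if `q = p` and `0`
otherwise, by biorthogonality of tents and coefficients) and `2^{-p-1} b (Δ_q w (t⁰) - Δ_q w (t²))`,
of size `‖v‖_∞ ‖w‖_β 2^{-qβ} 4^{q-p}` because `Δ_q w` is `2^{q+1} ‖w‖_β 2^{-qβ}`-Lipschitz. After
multiplication by `2^{pβ}` the sum over `q ≤ p` is a geometric series of ratio `2^{β-2} < 1`.
-/

namespace Sch

variable {E F G : Type*} [NormedAddCommGroup E] [NormedSpace ℝ E]
  [NormedAddCommGroup F] [NormedSpace ℝ F] [NormedAddCommGroup G]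

lemma integral_indicator_Ico_one {a b : ℝ} (ha : 0 ≤ a) (hab : a ≤ b) (t : ℝ) :
    ∫ s in (0:ℝ)..t, (Ico a b).indicator (fun _ => (1:ℝ)) s = min t b - min t a := by
  have hIoc : ∀ x y : ℝ, ∫ s in Ioc x y, (Ico a b).indicator (fun _ => (1:ℝ)) s
      = max (min y b - max x a) 0 := by
    intro x y
    have hae : (Ioc x y ∩ Ico a b : Set ℝ) =ᵐ[volume] (Ioc x y ∩ Ioc a b : Set ℝ) :=
      (Filter.EventuallyEq.refl _ _).inter (Ioo_ae_eq_Ico.symm.trans Ioo_ae_eq_Ioc)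
    rw [setIntegral_indicator measurableSet_Ico, setIntegral_const, measureReal_congr hae,
      Ioc_inter_Ioc, Real.volume_real_Ioc, smul_eq_mul, mul_one]
  rcases le_total 0 t with ht | ht
  · rw [intervalIntegral.integral_of_le ht, hIoc, max_eq_right ha]
    simp only [min_def, max_def]
    split_ifs <;> linarith
  · rw [intervalIntegral.integral_of_ge ht, hIoc, max_eq_right (ht.trans ha)]
    simp only [min_def, max_def]
    split_ifs <;> linarith

lemma integrable_indicator_Ico_one (a b : ℝ) :
    Integrable ((Ico a b).indicator (fun _ => (1:ℝ))) :=
  (integrable_indicator_iff measurableSet_Ico).2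
    (integrableOn_const (by rw [Real.volume_Ico]; exact ENNReal.ofReal_ne_top))

lemma pt0_add_one (p i : ℕ) : pt0 p (i + 1) = i / 2 ^ p := by
  simp [pt0]

lemma pt1_add_one (p i : ℕ) : pt1 p (i + 1) = (2 * i + 1) / 2 ^ (p + 1) := by
  simp only [pt1]; push_cast; ring

lemma pt2_add_one (p i : ℕ) : pt2 p (i + 1) = (i + 1) / 2 ^ p := by
  simp [pt2]

lemma natCast_div_two_pow_eq (j n d : ℕ) : (j:ℝ) / 2 ^ n = ((j * 2 ^ d : ℕ):ℝ) / 2 ^ (n + d) := by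
  push_cast; rw [pow_add]; field_simp

lemma pt0_add_one_eq_dyadic (p i : ℕ) : pt0 p (i + 1) = ((2 * i : ℕ):ℝ) / 2 ^ (p + 1) := by
  rw [pt0_add_one, pow_succ]; push_cast; field_simp

lemma pt1_add_one_eq_dyadic (p i : ℕ) : pt1 p (i + 1) = ((2 * i + 1 : ℕ):ℝ) / 2 ^ (p + 1) := by
  rw [pt1_add_one]; push_cast; rfl

lemma pt2_add_one_eq_dyadic (p i : ℕ) : pt2 p (i + 1) = ((2 * i + 2 : ℕ):ℝ) / 2 ^ (p + 1) := by
  rw [pt2_add_one, pow_succ]; push_cast; field_simp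

lemma pt0_le_pt1 (p m : ℕ) : pt0 p m ≤ pt1 p m := by
  simp only [pt0, pt1, pow_succ]
  rw [div_le_div_iff₀ (by positivity) (by positivity)]
  nlinarith [pow_pos (two_pos : (0:ℝ) < 2) p]

lemma pt1_le_pt2 (p m : ℕ) : pt1 p m ≤ pt2 p m := by
  simp only [pt1, pt2, pow_succ]
  rw [div_le_div_iff₀ (by positivity) (by positivity)]
  nlinarith [pow_pos (two_pos : (0:ℝ) < 2) p]

lemma pt0_le_pt2 (p m : ℕ) : pt0 p m ≤ pt2 p m :=
  (pt0_le_pt1 p m).trans (pt1_le_pt2 p m)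

lemma pt1_mem_Icc (p m : ℕ) : pt1 p m ∈ Icc (pt0 p m) (pt2 p m) :=
  ⟨pt0_le_pt1 p m, pt1_le_pt2 p m⟩

lemma pt0_nonneg {m : ℕ} (hm : m ≠ 0) (p : ℕ) : 0 ≤ pt0 p m := by
  obtain ⟨i, rfl⟩ := Nat.exists_eq_succ_of_ne_zero hm
  rw [pt0_add_one]; positivity

lemma pt2_le_one {p m : ℕ} (hm : m ≤ 2 ^ p) : pt2 p m ≤ 1 := by
  rw [pt2, div_le_one (by positivity)]; exact_mod_cast hm

lemma Icc_pt0_pt2_subset {p m : ℕ} (hm : m ≠ 0) (hm2 : m ≤ 2 ^ p) :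
    Icc (pt0 p m) (pt2 p m) ⊆ Icc 0 1 :=
  Icc_subset_Icc (pt0_nonneg hm p) (pt2_le_one hm2)

lemma pt2_sub_pt0 (p m : ℕ) : pt2 p m - pt0 p m = 1 / 2 ^ p := by
  simp only [pt0, pt2]; ring

lemma pt0_add_pt2 (p m : ℕ) : pt0 p m + pt2 p m = 2 * pt1 p m := by
  simp only [pt0, pt1, pt2, pow_succ]; field_simp; ring

lemma two_pow_mul_pt0 (p m : ℕ) : 2 ^ p * pt0 p m = m - 1 := by
  rw [pt0]; field_simp

lemma two_pow_mul_pt1 (p m : ℕ) : 2 ^ p * pt1 p m = m - 1 / 2 := by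
  rw [pt1, pow_succ]; field_simp

lemma two_pow_mul_pt2 (p m : ℕ) : 2 ^ p * pt2 p m = m := by
  rw [pt2]; field_simp

lemma div_two_pow_mem_Icc {n : ℕ} {x : ℝ} (h0 : 0 ≤ x) (h1 : x ≤ 2 ^ n) :
    x / 2 ^ n ∈ Icc (0:ℝ) 1 :=
  ⟨by positivity, (div_le_one (by positivity)).2 h1⟩

lemma exists_dyadic_cell (n : ℕ) {t : ℝ} (ht : t ∈ Icc (0:ℝ) 1) :
    ∃ k : ℕ, k < 2 ^ n ∧ (k:ℝ) ≤ 2 ^ n * t ∧ 2 ^ n * t ≤ k + 1 := by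
  have hx : 0 ≤ 2 ^ n * t := mul_nonneg (by positivity) ht.1
  rcases lt_or_ge t 1 with h | h
  · refine ⟨⌊2 ^ n * t⌋₊, (Nat.floor_lt hx).2 ?_, Nat.floor_le hx, (Nat.lt_floor_add_one _).le⟩
    push_cast
    exact mul_lt_of_lt_one_right (by positivity) h
  · have h1 : 1 ≤ 2 ^ n := Nat.one_le_two_pow
    refine ⟨2 ^ n - 1, by omega, ?_, ?_⟩ <;>
      rw [show t = 1 by linarith [ht.2]] <;> push_cast [Nat.cast_sub h1] <;> linarith

lemma exists_coarse_cell {n d i : ℕ} (hi : i < 2 ^ (n + d)) :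
    ∃ k : ℕ, k < 2 ^ n ∧ ∀ t ∈ Icc (pt0 (n + d) (i + 1)) (pt2 (n + d) (i + 1)),
      (k:ℝ) ≤ 2 ^ n * t ∧ 2 ^ n * t ≤ k + 1 := by
  have hd : 0 < 2 ^ d := Nat.two_pow_pos d
  have hki : ((i / 2 ^ d * 2 ^ d : ℕ):ℝ) ≤ i := by exact_mod_cast Nat.div_mul_le_self i _
  have hik : (i:ℝ) + 1 ≤ ((i / 2 ^ d * 2 ^ d + 2 ^ d : ℕ):ℝ) := by
    exact_mod_cast Nat.lt_div_mul_add hd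
  push_cast at hki hik
  refine ⟨i / 2 ^ d, by rw [Nat.div_lt_iff_lt_mul hd, ← pow_add]; exact hi, ?_⟩
  rintro t ⟨ht1, ht2⟩
  have h2d : (0:ℝ) < 2 ^ d := by positivity
  rw [pt0_add_one, div_le_iff₀' (by positivity), pow_add] at ht1
  rw [pt2_add_one, le_div_iff₀' (by positivity), pow_add] at ht2
  constructor <;> nlinarith

lemma chi_zero_zero : chi 0 0 = (Ico 0 1).indicator (fun _ => (1:ℝ)) := by
  funext s; simp [chi, indicator_apply]

lemma chi_zero_right {p : ℕ} (hp : p ≠ 0) : chi p 0 = 0 := by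
  funext s; simp [chi, hp]

lemma chi_eq_indicator {m : ℕ} (hm : m ≠ 0) (p : ℕ) : chi p m =
    fun s => 2 ^ p * (Ico (pt0 p m) (pt1 p m)).indicator (fun _ => (1:ℝ)) s
      - 2 ^ p * (Ico (pt1 p m) (pt2 p m)).indicator (fun _ => (1:ℝ)) s := by
  funext s
  simp only [chi, if_neg hm, indicator_apply, mem_Ico]
  split_ifs with hA hB hB' <;> first | ring1 | (exfalso; linarith [hA.2, hB.1])

lemma integrable_chi (p m : ℕ) : Integrable (chi p m) := by
  rcases eq_or_ne m 0 with rfl | hm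
  · rcases eq_or_ne p 0 with rfl | hp
    · rw [chi_zero_zero]; exact integrable_indicator_Ico_one 0 1
    · rw [chi_zero_right hp]; exact integrable_zero _ _ _
  · rw [chi_eq_indicator hm]
    exact ((integrable_indicator_Ico_one _ _).const_mul _).sub
      ((integrable_indicator_Ico_one _ _).const_mul _)

lemma abs_chi_le (p m : ℕ) (s : ℝ) : |chi p m s| ≤ 2 ^ p := by
  have : (1:ℝ) ≤ 2 ^ p := one_le_pow₀ one_le_two
  unfold chi
  split_ifs <;> simp [abs_of_nonneg, this]

lemma continuous_phi (p m : ℕ) : Continuous (phi p m) :=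
  intervalIntegral.continuous_primitive (fun _ _ => (integrable_chi p m).intervalIntegrable) 0

lemma phi_apply_zero (p m : ℕ) : phi p m 0 = 0 :=
  intervalIntegral.integral_same

lemma phi_zero_zero (t : ℝ) : phi 0 0 t = min t 1 - min t 0 := by
  rw [phi, chi_zero_zero, integral_indicator_Ico_one le_rfl zero_le_one]

lemma phi_zero_right {p : ℕ} (hp : p ≠ 0) : phi p 0 = 0 := by
  funext t; simp [phi, chi_zero_right hp]

lemma phi_eq_min {m : ℕ} (hm : m ≠ 0) (p : ℕ) (t : ℝ) :
    phi p m t = 2 ^ p * (2 * min t (pt1 p m) - min t (pt0 p m) - min t (pt2 p m)) := by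
  have h0 := pt0_nonneg hm p
  rw [phi, chi_eq_indicator hm, intervalIntegral.integral_sub
    (((integrable_indicator_Ico_one _ _).const_mul _).intervalIntegrable)
    (((integrable_indicator_Ico_one _ _).const_mul _).intervalIntegrable),
    intervalIntegral.integral_const_mul, intervalIntegral.integral_const_mul,
    integral_indicator_Ico_one h0 (pt0_le_pt1 p m),
    integral_indicator_Ico_one (h0.trans (pt0_le_pt1 p m)) (pt1_le_pt2 p m)]
  ring

lemma phi_eq_tent {m : ℕ} (hm : m ≠ 0) (p : ℕ) (t : ℝ) :
    phi p m t = max 0 (min (2 ^ p * t - (m - 1)) (m - 2 ^ p * t)) := by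
  have h2p : (0:ℝ) < 2 ^ p := by positivity
  have e : ∀ a : ℝ, 2 ^ p * min t a = min (2 ^ p * t) (2 ^ p * a) :=
    fun a => mul_min_of_nonneg _ _ h2p.le
  rw [phi_eq_min hm, mul_sub, mul_sub, ← mul_assoc, mul_comm _ (2:ℝ), mul_assoc, e, e, e,
    two_pow_mul_pt0, two_pow_mul_pt1, two_pow_mul_pt2]
  simp only [min_def, max_def]
  split_ifs <;> linarith

lemma phi_eq_zero_of_le_or_le {m : ℕ} (hm : m ≠ 0) {p : ℕ} {t : ℝ}
    (h : 2 ^ p * t ≤ m - 1 ∨ (m:ℝ) ≤ 2 ^ p * t) : phi p m t = 0 := by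
  rw [phi_eq_tent hm]
  refine max_eq_left ?_
  rcases h with h | h
  · exact (min_le_left _ _).trans (by linarith)
  · exact (min_le_right _ _).trans (by linarith)

lemma phi_dyadic {m : ℕ} (hm : m ≠ 0) (p j : ℕ) : phi p m (j / 2 ^ p) = 0 := by
  refine phi_eq_zero_of_le_or_le hm ?_
  rw [mul_div_cancel₀ _ (by positivity)]
  rcases le_or_gt m j with h | h
  · exact Or.inr (by exact_mod_cast h)
  · have : (j:ℝ) + 1 ≤ m := by exact_mod_cast h
    exact Or.inl (by linarith)

lemma phi_add_one_of_mem_cell {p k : ℕ} {t : ℝ} (h1 : (k:ℝ) ≤ 2 ^ p * t)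
    (h2 : 2 ^ p * t ≤ k + 1) : phi p (k + 1) t = min (2 ^ p * t - k) (k + 1 - 2 ^ p * t) := by
  rw [phi_eq_tent k.succ_ne_zero]
  push_cast
  rw [add_sub_cancel_right, max_eq_right (le_min (by linarith) (by linarith))]

lemma phi_mem_Icc (p m : ℕ) (t : ℝ) : phi p m t ∈ Icc 0 1 := by
  rcases eq_or_ne m 0 with rfl | hm
  · rcases eq_or_ne p 0 with rfl | hp
    · rw [phi_zero_zero]
      constructor <;> (simp only [min_def]; split_ifs <;> linarith)
    · simp [phi_zero_right hp]
  · rw [phi_eq_tent hm]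
    exact ⟨le_max_left _ _, max_le zero_le_one (by simp only [min_def]; split_ifs <;> linarith)⟩

lemma eq_floor_add_one {m : ℕ} (hm : m ≠ 0) {x : ℝ} (h1 : (m:ℝ) - 1 ≤ x) (h2 : x < m) :
    m = ⌊x⌋₊ + 1 := by
  obtain ⟨i, rfl⟩ := Nat.exists_eq_succ_of_ne_zero hm
  push_cast at h1 h2
  have : ⌊x⌋₊ = i := (Nat.floor_eq_iff (by linarith [i.cast_nonneg (α := ℝ)])).2
    ⟨by linarith, by linarith⟩
  omega

lemma eq_floor_add_one_of_phi_ne_zero {p m : ℕ} (hm : m ≠ 0) {t : ℝ} (h : phi p m t ≠ 0) :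
    m = ⌊2 ^ p * t⌋₊ + 1 :=
  eq_floor_add_one hm (not_lt.1 fun h' => h (phi_eq_zero_of_le_or_le hm (Or.inl h'.le)))
    (not_le.1 fun h' => h (phi_eq_zero_of_le_or_le hm (Or.inr h')))

lemma eq_floor_add_one_of_chi_ne_zero {p m : ℕ} (hm : m ≠ 0) {s : ℝ} (h : chi p m s ≠ 0) :
    m = ⌊2 ^ p * s⌋₊ + 1 := by
  have hs : pt0 p m ≤ s ∧ s < pt2 p m := by
    simp only [chi, if_neg hm] at h
    split_ifs at h with h1 h2
    · exact ⟨h1.1, h1.2.trans_le (pt1_le_pt2 p m)⟩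
    · exact ⟨(pt0_le_pt1 p m).trans h2.1, h2.2⟩
    · exact absurd rfl h
  have h2p : (0:ℝ) < 2 ^ p := by positivity
  refine eq_floor_add_one hm ?_ ?_
  · rw [← two_pow_mul_pt0 p m]; exact mul_le_mul_of_nonneg_left hs.1 h2p.le
  · rw [← two_pow_mul_pt2 p m]; exact mul_lt_mul_of_pos_left hs.2 h2p

lemma sum_le_of_subsingleton_support {ι : Type*} (s : Finset ι) {f : ι → ℝ} {C : ℝ}
    (hC : 0 ≤ C) (hf : ∀ i ∈ s, f i ≤ C)
    (huniq : ∀ i ∈ s, ∀ j ∈ s, f i ≠ 0 → f j ≠ 0 → i = j) : ∑ i ∈ s, f i ≤ C := by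
  by_cases h : ∃ i ∈ s, f i ≠ 0
  · obtain ⟨i, hi, hfi⟩ := h
    rw [Finset.sum_eq_single_of_mem i hi fun j hj hji => not_not.1 fun hfj =>
      hji (huniq j hj i hi hfj hfi)]
    exact hf i hi
  · push Not at h
    rwa [Finset.sum_eq_zero h]

lemma norm_sum_range_smul_le (g : ℕ → ℝ) (c : ℕ → E) (N : ℕ) {A K : ℝ} (hg : ∀ m, |g m| ≤ A)
    (hc : ∀ m ≤ N, ‖c m‖ ≤ K)
    (huniq : ∀ m m', m ≠ 0 → m' ≠ 0 → g m ≠ 0 → g m' ≠ 0 → m = m') :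
    ‖∑ m ∈ Finset.range (N + 1), g m • c m‖ ≤ 2 * (A * K) := by
  have hA : 0 ≤ A := (abs_nonneg _).trans (hg 0)
  have hterm : ∀ m ≤ N, ‖g m • c m‖ ≤ A * K := fun m hm => by
    rw [norm_smul, Real.norm_eq_abs]; exact mul_le_mul (hg m) (hc m hm) (norm_nonneg _) hA
  have hrest : ∑ i ∈ Finset.range N, ‖g (i + 1) • c (i + 1)‖ ≤ A * K := by
    refine sum_le_of_subsingleton_support _ (mul_nonneg hA ((norm_nonneg _).trans (hc 0 N.zero_le)))
      (fun i hi => hterm _ (Finset.mem_range.1 hi)) fun i _ j _ hi hj => ?_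
    have := huniq (i + 1) (j + 1) i.succ_ne_zero j.succ_ne_zero (fun h => hi (by simp [h]))
      (fun h => hj (by simp [h]))
    omega
  refine (norm_sum_le _ _).trans ?_
  rw [Finset.sum_range_succ']
  linarith [hterm 0 N.zero_le]

lemma coeff_zero_zero (f : ℝ → G) : coeff f 0 0 = f 1 - f 0 := by
  simp [coeff]

lemma coeff_zero_right (f : ℝ → G) {p : ℕ} (hp : p ≠ 0) : coeff f p 0 = 0 := by
  simp [coeff, hp]

lemma coeff_sum_smul {ι : Type*} (s : Finset ι) (g : ι → ℝ → ℝ) (c : ι → E) (p m : ℕ) :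
    coeff (fun t => ∑ i ∈ s, g i t • c i) p m = ∑ i ∈ s, coeff (g i) p m • c i := by
  unfold coeff
  split_ifs <;> simp only [← Finset.sum_sub_distrib, ← Finset.sum_add_distrib, sub_smul, add_smul,
    zero_smul, Finset.sum_const_zero]

lemma coeff_tsum {g : ℕ → ℝ → G} (hg : ∀ t ∈ Icc (0:ℝ) 1, Summable fun q => g q t) {p m : ℕ}
    (hm2 : m ≤ 2 ^ p) : coeff (fun t => ∑' q, g q t) p m = ∑' q, coeff (g q) p m := by
  unfold coeff
  split_ifs with hm hp
  · exact ((hg 1 (right_mem_Icc.2 zero_le_one)).tsum_sub (hg 0 (left_mem_Icc.2 zero_le_one))).symm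
  · simp
  · have hs := fun t (ht : t ∈ Icc (pt0 p m) (pt2 p m)) => hg t (Icc_pt0_pt2_subset hm hm2 ht)
    have h0 := hs _ (left_mem_Icc.2 (pt0_le_pt2 p m))
    have h1 := hs _ (pt1_mem_Icc p m)
    have h2 := hs _ (right_mem_Icc.2 (pt0_le_pt2 p m))
    rw [← h1.tsum_add h1, ← (h1.add h1).tsum_sub h0, ← ((h1.add h1).sub h0).tsum_sub h2]

/-- Tents are combinations of `min · x` with dyadic `x`; this is how their coefficients are
computed. -/
lemma two_mul_min_sub_min_sub_min_dyadic (p i j : ℕ) :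
    2 * min (pt1 p (i + 1)) (j / 2 ^ (p + 1)) - min (pt0 p (i + 1)) (j / 2 ^ (p + 1))
      - min (pt2 p (i + 1)) (j / 2 ^ (p + 1)) = if j = 2 * i + 1 then 1 / 2 ^ (p + 1) else 0 := by
  have h2p : (0:ℝ) ≤ 2 ^ (p + 1) := by positivity
  rw [pt0_add_one_eq_dyadic, pt1_add_one_eq_dyadic, pt2_add_one_eq_dyadic,
    min_div_div_right h2p, min_div_div_right h2p, min_div_div_right h2p,
    ← Nat.cast_min, ← Nat.cast_min, ← Nat.cast_min]
  split_ifs with h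
  · subst h
    rw [min_self, Nat.min_eq_left (by omega), Nat.min_eq_right (by omega)]
    push_cast; ring
  · rcases (by omega : j ≤ 2 * i ∨ 2 * i + 2 ≤ j) with hj | hj
    · rw [Nat.min_eq_right (by omega), Nat.min_eq_right hj, Nat.min_eq_right (by omega)]; ring
    · rw [Nat.min_eq_left (by omega), Nat.min_eq_left (by omega), Nat.min_eq_left hj]
      push_cast; ring

lemma coeff_phi_zero_zero {m : ℕ} (hm : m ≠ 0) (p : ℕ) : coeff (phi 0 0) p m = 0 := by
  obtain ⟨i, rfl⟩ := Nat.exists_eq_succ_of_ne_zero hm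
  have h1 := two_mul_min_sub_min_sub_min_dyadic p i (2 ^ (p + 1))
  have h0 := two_mul_min_sub_min_sub_min_dyadic p i 0
  rw [if_neg (by rw [pow_succ]; omega)] at h1
  rw [if_neg (by omega)] at h0
  push_cast at h1 h0
  rw [div_self (by positivity)] at h1
  rw [zero_div] at h0
  simp only [coeff, if_neg hm, phi_zero_zero]
  linear_combination h1 - h0

lemma coeff_phi_of_le {m m' : ℕ} (hm : m ≠ 0) (hm' : m' ≠ 0) {p q : ℕ} (hqp : q ≤ p) :
    coeff (phi q m') p m = if q = p ∧ m' = m then 1 else 0 := by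
  obtain ⟨i, rfl⟩ := Nat.exists_eq_succ_of_ne_zero hm
  obtain ⟨i', rfl⟩ := Nat.exists_eq_succ_of_ne_zero hm'
  obtain ⟨d, rfl⟩ := Nat.exists_eq_add_of_le hqp
  have e : ∀ j : ℕ, (j:ℝ) / 2 ^ (q + 1) = ((j * 2 ^ d : ℕ):ℝ) / 2 ^ (q + d + 1) := fun j => by
    rw [natCast_div_two_pow_eq j (q + 1) d, Nat.add_right_comm]
  have h0 := two_mul_min_sub_min_sub_min_dyadic (q + d) i (2 * i' * 2 ^ d)
  have h1 := two_mul_min_sub_min_sub_min_dyadic (q + d) i ((2 * i' + 1) * 2 ^ d)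
  have h2 := two_mul_min_sub_min_sub_min_dyadic (q + d) i ((2 * i' + 2) * 2 ^ d)
  rw [if_neg (by rw [mul_assoc]; omega)] at h0
  rw [if_neg (by rw [show (2 * i' + 2) * 2 ^ d = 2 * ((i' + 1) * 2 ^ d) by ring]; omega)] at h2
  simp only [coeff, if_neg hm, phi_eq_min hm']
  rw [pt0_add_one_eq_dyadic q i', pt1_add_one_eq_dyadic q i', pt2_add_one_eq_dyadic q i', e, e, e]
  rcases d with _ | d
  · by_cases hi : i' = i
    · subst hi
      rw [if_pos (by ring)] at h1
      rw [if_pos ⟨rfl, rfl⟩]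
      have hc : (2:ℝ) ^ q * (2 * (1 / 2 ^ (q + 0 + 1))) = 1 := by rw [pow_succ]; field_simp
      linear_combination 2 ^ q * (2 * h1 - h0 - h2) + hc
    · rw [if_neg (by omega)] at h1
      rw [if_neg (by omega)]
      linear_combination 2 ^ q * (2 * h1 - h0 - h2)
  · have hodd : (2 * i' + 1) * 2 ^ (d + 1) = 2 * ((2 * i' + 1) * 2 ^ d) := by ring
    rw [if_neg (by omega)] at h1
    rw [if_neg (by omega)]
    linear_combination 2 ^ q * (2 * h1 - h0 - h2)

lemma coeff_phi_of_lt {m m' : ℕ} (hm : m ≠ 0) (hm' : m' ≠ 0) {p q : ℕ} (hpq : p < q) :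
    coeff (phi q m') p m = 0 := by
  obtain ⟨i, rfl⟩ := Nat.exists_eq_succ_of_ne_zero hm
  obtain ⟨e, rfl⟩ : ∃ e, q = p + 1 + e := ⟨q - (p + 1), by omega⟩
  rw [coeff, if_neg hm, pt0_add_one_eq_dyadic, pt1_add_one_eq_dyadic, pt2_add_one_eq_dyadic,
    natCast_div_two_pow_eq (2 * i) (p + 1) e, natCast_div_two_pow_eq (2 * i + 1) (p + 1) e,
    natCast_div_two_pow_eq (2 * i + 2) (p + 1) e]
  simp only [phi_dyadic hm']
  ring

lemma coeff_phi {m : ℕ} (hm : m ≠ 0) (p q m' : ℕ) :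
    coeff (phi q m') p m = if q = p ∧ m' = m then 1 else 0 := by
  rcases eq_or_ne m' 0 with rfl | hm'
  · rw [if_neg fun h => hm h.2.symm]
    rcases eq_or_ne q 0 with rfl | hq
    · exact coeff_phi_zero_zero hm p
    · simp [phi_zero_right hq, coeff]
  rcases le_or_gt q p with hqp | hpq
  · exact coeff_phi_of_le hm hm' hqp
  · rw [coeff_phi_of_lt hm hm' hpq, if_neg fun h => hpq.ne' h.1]

lemma norm_block_le (f : ℝ → E) {q : ℕ} {K : ℝ} (hc : ∀ m ≤ 2 ^ q, ‖coeff f q m‖ ≤ K) (t : ℝ) :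
    ‖block f (q + 1) t‖ ≤ 2 * K := by
  have := norm_sum_range_smul_le (fun m => phi q m t) (coeff f q) (2 ^ q) (A := 1)
    (fun m => abs_le.2 ⟨by linarith [(phi_mem_Icc q m t).1], (phi_mem_Icc q m t).2⟩) hc
    fun _ _ hm hm' h h' => (eq_floor_add_one_of_phi_ne_zero hm h).trans
      (eq_floor_add_one_of_phi_ne_zero hm' h').symm
  rwa [one_mul] at this

lemma norm_dblock_le (f : ℝ → E) {q : ℕ} {K : ℝ} (hc : ∀ m ≤ 2 ^ q, ‖coeff f q m‖ ≤ K) (s : ℝ) :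
    ‖dblock f (q + 1) s‖ ≤ 2 * (2 ^ q * K) :=
  norm_sum_range_smul_le (fun m => chi q m s) (coeff f q) (2 ^ q) (abs_chi_le q · s) hc
    fun _ _ hm hm' h h' => (eq_floor_add_one_of_chi_ne_zero hm h).trans
      (eq_floor_add_one_of_chi_ne_zero hm' h').symm

lemma block_sub_block [CompleteSpace E] (f : ℝ → E) (q : ℕ) (x y : ℝ) :
    block f (q + 1) y - block f (q + 1) x = ∫ s in x..y, dblock f (q + 1) s := by
  simp only [block, dblock]
  rw [intervalIntegral.integral_finsetSum fun m _ =>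
    ((integrable_chi q m).smul_const _).intervalIntegrable, ← Finset.sum_sub_distrib]
  refine Finset.sum_congr rfl fun m _ => ?_
  rw [intervalIntegral.integral_smul_const, ← sub_smul, phi, phi,
    intervalIntegral.integral_interval_sub_left (integrable_chi q m).intervalIntegrable
      (integrable_chi q m).intervalIntegrable]

lemma norm_block_sub_block_le [CompleteSpace E] (f : ℝ → E) {q : ℕ} {K : ℝ}
    (hc : ∀ m ≤ 2 ^ q, ‖coeff f q m‖ ≤ K) {x y : ℝ} (hxy : x ≤ y) :
    ‖block f (q + 1) y - block f (q + 1) x‖ ≤ 2 * (2 ^ q * K) * (y - x) := by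
  rw [block_sub_block, ← abs_of_nonneg (sub_nonneg.2 hxy)]
  exact intervalIntegral.norm_integral_le_of_norm_le_const fun s _ => norm_dblock_le f hc s

lemma continuous_block (f : ℝ → E) : ∀ k, Continuous (block f k)
  | 0 => continuous_const
  | q + 1 => continuous_finsetSum _ fun m _ => (continuous_phi q m).smul continuous_const

lemma continuous_psum (f : ℝ → E) (n : ℕ) : Continuous (psum f n) :=
  continuous_finsetSum _ fun k _ => continuous_block f k

lemma coeff_block (f : ℝ → E) {p m : ℕ} (hm : m ≠ 0) (hm2 : m ≤ 2 ^ p) (q : ℕ) :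
    coeff (block f (q + 1)) p m = if q = p then coeff f p m else 0 := by
  simp only [block, coeff_sum_smul, coeff_phi hm, ite_smul, one_smul, zero_smul]
  split_ifs with hqp
  · subst hqp
    simp [Finset.sum_ite_eq', Nat.lt_succ_of_le hm2]
  · simp [hqp]

lemma block_succ_apply_zero (f : ℝ → E) (q : ℕ) : block f (q + 1) 0 = 0 := by
  simp [block, phi_apply_zero]

lemma block_succ_dyadic (f : ℝ → E) {q : ℕ} (hq : q ≠ 0) (j : ℕ) :
    block f (q + 1) (j / 2 ^ q) = 0 := by
  refine Finset.sum_eq_zero fun m _ => ?_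
  rcases eq_or_ne m 0 with rfl | hm
  · simp [phi_zero_right hq]
  · simp [phi_dyadic hm]

lemma block_succ_apply_one (f : ℝ → E) {q : ℕ} (hq : q ≠ 0) : block f (q + 1) 1 = 0 := by
  simpa [div_self] using block_succ_dyadic f hq (2 ^ q)

lemma block_one_apply_one (f : ℝ → E) : block f 1 1 = f 1 - f 0 := by
  have h : phi 0 1 1 = 0 := by simpa using phi_dyadic one_ne_zero 0 1
  simp [block, Finset.sum_range_succ, phi_zero_zero, h, coeff_zero_zero]

lemma block_succ_dyadic_of_lt (f : ℝ → E) {p q : ℕ} (hpq : p < q) (j : ℕ) :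
    block f (q + 1) (j / 2 ^ (p + 1)) = 0 := by
  obtain ⟨e, rfl⟩ : ∃ e, q = p + 1 + e := ⟨q - (p + 1), by omega⟩
  rw [natCast_div_two_pow_eq j (p + 1) e]
  exact block_succ_dyadic f (by omega) _

lemma block_succ_eq_of_mem_cell (f : ℝ → E) {p k : ℕ} (hp : p ≠ 0) (hk : k < 2 ^ p) {t : ℝ}
    (h1 : (k:ℝ) ≤ 2 ^ p * t) (h2 : 2 ^ p * t ≤ k + 1) :
    block f (p + 1) t = phi p (k + 1) t • coeff f p (k + 1) := by
  refine Finset.sum_eq_single_of_mem (k + 1) (Finset.mem_range.2 (by omega)) fun m _ hmk => ?_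
  rcases eq_or_ne m 0 with rfl | hm
  · simp [phi_zero_right hp]
  · rw [phi_eq_zero_of_le_or_le hm ?_, zero_smul]
    rcases lt_or_gt_of_ne hmk with h | h
    · have : (m:ℝ) ≤ k := by exact_mod_cast Nat.lt_succ_iff.1 h
      exact Or.inr (by linarith)
    · have : (k:ℝ) + 2 ≤ m := by exact_mod_cast h
      exact Or.inl (by linarith)

lemma psum_zero (f : ℝ → E) (t : ℝ) : psum f 0 t = f 0 := by
  simp [psum, block]

lemma psum_succ (f : ℝ → E) (n : ℕ) (t : ℝ) :
    psum f (n + 1) t = psum f n t + block f (n + 1) t :=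
  Finset.sum_range_succ _ _

/-- Adding the tent of the cell `[k/2^p, (k+1)/2^p]` to the linear interpolation of `f` on that
cell gives the linear interpolation on each of its two halves. -/
lemma interp_add_phi_smul_coeff (f : ℝ → E) (p k : ℕ) {t : ℝ} (h1 : (k:ℝ) ≤ 2 ^ p * t)
    (h2 : 2 ^ p * t ≤ k + 1) {j : ℕ} (hj : j = 2 * k ∨ j = 2 * k + 1)
    (hj1 : (j:ℝ) ≤ 2 ^ (p + 1) * t) (hj2 : 2 ^ (p + 1) * t ≤ j + 1) :
    f (k / 2 ^ p) + (2 ^ p * t - k) • (f ((k + 1) / 2 ^ p) - f (k / 2 ^ p))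
        + phi p (k + 1) t • coeff f p (k + 1)
      = f (j / 2 ^ (p + 1))
        + (2 ^ (p + 1) * t - j) • (f ((j + 1) / 2 ^ (p + 1)) - f (j / 2 ^ (p + 1))) := by
  rw [phi_add_one_of_mem_cell h1 h2, coeff, if_neg k.succ_ne_zero, pt0_add_one, pt1_add_one,
    pt2_add_one]
  rcases hj with rfl | rfl
  · push_cast at hj1 hj2 ⊢
    have eL : (2 * k : ℝ) / 2 ^ (p + 1) = k / 2 ^ p := by rw [pow_succ]; field_simp
    rw [pow_succ] at hj2
    rw [min_eq_left (by linarith), eL, pow_succ]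
    module
  · push_cast at hj1 hj2 ⊢
    have eR : (2 * k + 1 + 1 : ℝ) / 2 ^ (p + 1) = (k + 1) / 2 ^ p := by
      rw [pow_succ]; field_simp; ring
    rw [pow_succ] at hj1
    rw [min_eq_right (by linarith), eR, pow_succ]
    module

lemma psum_succ_eq (f : ℝ → E) (p : ℕ) {j : ℕ} (hj : j < 2 ^ (p + 1)) {t : ℝ}
    (h1 : (j:ℝ) ≤ 2 ^ (p + 1) * t) (h2 : 2 ^ (p + 1) * t ≤ j + 1) :
    psum f (p + 1) t = f (j / 2 ^ (p + 1))
      + (2 ^ (p + 1) * t - j) • (f ((j + 1) / 2 ^ (p + 1)) - f (j / 2 ^ (p + 1))) := by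
  induction p generalizing j with
  | zero =>
    have hj1 : (j:ℝ) ≤ 1 := by exact_mod_cast Nat.lt_succ_iff.1 hj
    have h1' : (j:ℝ) ≤ 2 * t := by simpa using h1
    have h2' : 2 * t ≤ j + 1 := by simpa using h2
    have ht0 : 0 ≤ t := by linarith [j.cast_nonneg (α := ℝ)]
    have ht1 : t ≤ 1 := by linarith
    have hbase : psum f 1 t = f ((0:ℕ) / 2 ^ 0) + (2 ^ 0 * t - (0:ℕ)) •
        (f (((0:ℕ) + 1) / 2 ^ 0) - f ((0:ℕ) / 2 ^ 0)) + phi 0 (0 + 1) t • coeff f 0 (0 + 1) := by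
      simp [psum, block, Finset.sum_range_succ, phi_zero_zero, coeff, min_eq_left ht1,
        min_eq_right ht0]
      abel
    rw [hbase]
    exact interp_add_phi_smul_coeff f 0 0 (by simpa using ht0) (by simpa using ht1) (by omega) h1 h2
  | succ p ih =>
    have hk : j / 2 < 2 ^ (p + 1) := by rw [pow_succ] at hj; omega
    have hjk : ((2 * (j / 2) : ℕ):ℝ) ≤ j ∧ (j:ℝ) ≤ (2 * (j / 2) + 1 : ℕ) :=
      ⟨by exact_mod_cast Nat.mul_div_le j 2, by exact_mod_cast (by omega)⟩
    push_cast at hjk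
    have hk1 : ((j / 2 : ℕ):ℝ) ≤ 2 ^ (p + 1) * t := by rw [pow_succ] at h1; linarith
    have hk2 : 2 ^ (p + 1) * t ≤ (j / 2 : ℕ) + 1 := by rw [pow_succ] at h2; linarith
    rw [psum_succ, ih hk hk1 hk2, block_succ_eq_of_mem_cell f p.succ_ne_zero hk hk1 hk2]
    exact interp_add_phi_smul_coeff f (p + 1) (j / 2) hk1 hk2 (by omega) h1 h2

lemma psum_mem_of_convex (f : ℝ → E) {s : Set E} (hs : Convex ℝ s)
    (hf : ∀ t ∈ Icc (0:ℝ) 1, f t ∈ s) (n : ℕ) {t : ℝ} (ht : t ∈ Icc (0:ℝ) 1) : psum f n t ∈ s := by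
  cases n with
  | zero => rw [psum_zero]; exact hf 0 (left_mem_Icc.2 zero_le_one)
  | succ p =>
    obtain ⟨k, hk, h1, h2⟩ := exists_dyadic_cell (p + 1) ht
    rw [psum_succ_eq f p hk h1 h2]
    have hk' : (k:ℝ) + 1 ≤ 2 ^ (p + 1) := by exact_mod_cast hk
    exact hs.add_smul_sub_mem (hf _ (div_two_pow_mem_Icc (by positivity) (by linarith)))
      (hf _ (div_two_pow_mem_Icc (by positivity) hk')) ⟨by linarith, by linarith⟩

lemma norm_psum_le (f : ℝ → E) {M : ℝ} (hf : ∀ t ∈ Icc (0:ℝ) 1, ‖f t‖ ≤ M) (n : ℕ) {t : ℝ}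
    (ht : t ∈ Icc (0:ℝ) 1) : ‖psum f n t‖ ≤ M := by
  simpa using psum_mem_of_convex f (convex_closedBall 0 M)
    (fun t ht => mem_closedBall_zero_iff.2 (hf t ht)) n ht

lemma psum_eq_affine_on_cell (f : ℝ → E) {M : ℝ} (hf : ∀ t ∈ Icc (0:ℝ) 1, ‖f t‖ ≤ M)
    {n p m : ℕ} (hm : m ≠ 0) (hm2 : m ≤ 2 ^ p) (hnp : n ≤ p) :
    ∃ a b : E, ‖b‖ ≤ 2 ^ n * (2 * M) ∧ ∀ t ∈ Icc (pt0 p m) (pt2 p m), psum f n t = a + t • b := by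
  have hM : 0 ≤ M := (norm_nonneg _).trans (hf 0 (left_mem_Icc.2 zero_le_one))
  cases n with
  | zero => exact ⟨f 0, 0, by simp; positivity, fun t _ => by simp [psum_zero]⟩
  | succ q =>
    obtain ⟨d, rfl⟩ := Nat.exists_eq_add_of_le hnp
    obtain ⟨i, rfl⟩ := Nat.exists_eq_succ_of_ne_zero hm
    obtain ⟨k, hk, cell⟩ := exists_coarse_cell (Nat.succ_le_iff.1 hm2)
    have hk' : (k:ℝ) + 1 ≤ 2 ^ (q + 1) := by exact_mod_cast hk
    set L := f (k / 2 ^ (q + 1))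
    set R := f ((k + 1) / 2 ^ (q + 1))
    refine ⟨L - (k:ℝ) • (R - L), (2:ℝ) ^ (q + 1) • (R - L), ?_, fun t ht => ?_⟩
    · rw [norm_smul, Real.norm_of_nonneg (by positivity)]
      refine mul_le_mul_of_nonneg_left ((norm_sub_le _ _).trans ?_) (by positivity)
      linarith [hf _ (div_two_pow_mem_Icc (k.cast_nonneg) (by linarith)),
        hf _ (div_two_pow_mem_Icc (by positivity) hk')]
    · rw [psum_succ_eq f q hk (cell t ht).1 (cell t ht).2]
      module

def paraTerm (v : ℝ → (E →L[ℝ] F)) (w : ℝ → E) (q : ℕ) (t : ℝ) : F :=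
  (psum v q t) (block w (q + 1) t)

lemma continuous_paraTerm (v : ℝ → (E →L[ℝ] F)) (w : ℝ → E) (q : ℕ) :
    Continuous (paraTerm v w q) :=
  (continuous_psum v q).clm_apply (continuous_block w (q + 1))

lemma para_apply_zero (v : ℝ → (E →L[ℝ] F)) (w : ℝ → E) : para v w 0 = 0 := by
  simp [para, block_succ_apply_zero]

lemma apply_secondDiff_of_affine (a b : E →L[ℝ] F) {t₀ t₁ t₂ : ℝ} (h : t₀ + t₂ = 2 * t₁)
    (x₀ x₁ x₂ : E) :
    (a + t₁ • b) x₁ + (a + t₁ • b) x₁ - (a + t₀ • b) x₀ - (a + t₂ • b) x₂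
      = (a + t₁ • b) (x₁ + x₁ - x₀ - x₂) + ((t₂ - t₀) / 2) • b (x₀ - x₂) := by
  obtain rfl : t₀ = 2 * t₁ - t₂ := by linarith
  simp only [add_apply, smul_apply, map_add, map_sub]
  module

variable {v : ℝ → (E →L[ℝ] F)} {w : ℝ → E} {M K : ℝ}

lemma norm_paraTerm_le (hv : ∀ t ∈ Icc (0:ℝ) 1, ‖v t‖ ≤ M) {q : ℕ}
    (hc : ∀ m ≤ 2 ^ q, ‖coeff w q m‖ ≤ K) {t : ℝ} (ht : t ∈ Icc (0:ℝ) 1) :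
    ‖paraTerm v w q t‖ ≤ M * (2 * K) :=
  ((psum v q t).le_opNorm _).trans (mul_le_mul (norm_psum_le v hv q ht) (norm_block_le w hc t)
    (norm_nonneg _) ((norm_nonneg _).trans (hv 0 (left_mem_Icc.2 zero_le_one))))

lemma coeff_paraTerm_of_lt {p q : ℕ} (hpq : p < q) (m : ℕ) : coeff (paraTerm v w q) p m = 0 := by
  unfold coeff
  split_ifs with hm hp
  · simp [paraTerm, block_succ_apply_one w (by omega : q ≠ 0), block_succ_apply_zero]
  · rfl
  · obtain ⟨i, rfl⟩ := Nat.exists_eq_succ_of_ne_zero hm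
    simp only [paraTerm, pt0_add_one_eq_dyadic, pt1_add_one_eq_dyadic, pt2_add_one_eq_dyadic,
      block_succ_dyadic_of_lt w hpq, map_zero, sub_self, add_zero]

lemma coeff_paraTerm_zero_zero : coeff (paraTerm v w 0) 0 0 = v 0 (w 1 - w 0) := by
  simp only [coeff_zero_zero, paraTerm, psum_zero, zero_add, block_one_apply_one,
    block_succ_apply_zero, map_zero, sub_zero]

lemma coeff_paraTerm_of_affine {p q m : ℕ} (hm : m ≠ 0) {a b : E →L[ℝ] F}
    (hab : ∀ t ∈ Icc (pt0 p m) (pt2 p m), psum v q t = a + t • b) :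
    coeff (paraTerm v w q) p m = psum v q (pt1 p m) (coeff (block w (q + 1)) p m)
      + ((1:ℝ) / 2 ^ p / 2) • b (block w (q + 1) (pt0 p m) - block w (q + 1) (pt2 p m)) := by
  simp only [coeff, if_neg hm, paraTerm, hab _ (left_mem_Icc.2 (pt0_le_pt2 p m)),
    hab _ (pt1_mem_Icc p m), hab _ (right_mem_Icc.2 (pt0_le_pt2 p m))]
  rw [apply_secondDiff_of_affine a b (pt0_add_pt2 p m), pt2_sub_pt0]

lemma norm_coeff_paraTerm_le [CompleteSpace E] (hv : ∀ t ∈ Icc (0:ℝ) 1, ‖v t‖ ≤ M) {p q m : ℕ}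
    (hc : ∀ m ≤ 2 ^ q, ‖coeff w q m‖ ≤ K) (hqp : q ≤ p) (hm2 : m ≤ 2 ^ p) :
    ‖coeff (paraTerm v w q) p m‖ ≤ (if q = p then M * K else 0) + 2 * M * K * (4 ^ q / 4 ^ p) := by
  have hM : 0 ≤ M := (norm_nonneg _).trans (hv 0 (left_mem_Icc.2 zero_le_one))
  have hK : 0 ≤ K := (norm_nonneg _).trans (hc 0 (Nat.zero_le _))
  rcases eq_or_ne m 0 with rfl | hm
  · rcases eq_or_ne p 0 with rfl | hp
    · obtain rfl : q = 0 := by omega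
      have hw : ‖w 1 - w 0‖ ≤ K := by simpa [coeff_zero_zero] using hc 0 (Nat.zero_le _)
      rw [coeff_paraTerm_zero_zero, if_pos rfl]
      calc ‖v 0 (w 1 - w 0)‖ ≤ M * K :=
            ((v 0).le_opNorm _).trans (mul_le_mul (hv 0 (left_mem_Icc.2 zero_le_one)) hw
              (norm_nonneg _) hM)
        _ ≤ _ := le_add_of_nonneg_right (by positivity)
    · rw [coeff_zero_right _ hp, norm_zero]
      split_ifs <;> positivity
  obtain ⟨a, b, hb, hab⟩ := psum_eq_affine_on_cell v hv hm hm2 hqp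
  rw [coeff_paraTerm_of_affine hm hab, coeff_block w hm hm2]
  refine (norm_add_le _ _).trans (add_le_add ?_ ?_)
  · split_ifs with hqp'
    · subst hqp'
      exact ((psum v q _).le_opNorm _).trans (mul_le_mul
        (norm_psum_le v hv q (Icc_pt0_pt2_subset hm hm2 (pt1_mem_Icc q m))) (hc m hm2)
        (norm_nonneg _) hM)
    · simp
  · have hB := norm_block_sub_block_le w hc (pt0_le_pt2 p m)
    rw [norm_sub_rev, pt2_sub_pt0] at hB
    calc ‖((1:ℝ) / 2 ^ p / 2) • b (block w (q + 1) (pt0 p m) - block w (q + 1) (pt2 p m))‖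
        ≤ 1 / 2 ^ p / 2 * (2 ^ q * (2 * M) * (2 * (2 ^ q * K) * (1 / 2 ^ p))) := by
          rw [norm_smul, Real.norm_of_nonneg (by positivity)]
          gcongr
          exact (b.le_opNorm _).trans (mul_le_mul hb hB (norm_nonneg _) (by positivity))
      _ = 2 * M * K * (4 ^ q / 4 ^ p) := by
          rw [show (4:ℝ) = 2 * 2 by norm_num, mul_pow, mul_pow]; field_simp

variable {ρ : ℝ}

lemma norm_paraTerm_le_geometric (hv : ∀ t ∈ Icc (0:ℝ) 1, ‖v t‖ ≤ M)
    (hw : ∀ q m, m ≤ 2 ^ q → ‖coeff w q m‖ ≤ K / ρ ^ q) (q : ℕ) {t : ℝ} (ht : t ∈ Icc (0:ℝ) 1) :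
    ‖paraTerm v w q t‖ ≤ 2 * M * K * ρ⁻¹ ^ q :=
  (norm_paraTerm_le hv (hw q) ht).trans_eq (by ring)

lemma summable_paraTerm [CompleteSpace F] (hρ : 1 < ρ) (hv : ∀ t ∈ Icc (0:ℝ) 1, ‖v t‖ ≤ M)
    (hw : ∀ q m, m ≤ 2 ^ q → ‖coeff w q m‖ ≤ K / ρ ^ q) {t : ℝ} (ht : t ∈ Icc (0:ℝ) 1) :
    Summable fun q => paraTerm v w q t :=
  .of_norm_bounded ((summable_geometric_of_lt_one (by positivity)
    (inv_lt_one_of_one_lt₀ hρ)).mul_left _) fun q => norm_paraTerm_le_geometric hv hw q ht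

lemma continuousOn_para [CompleteSpace F] (hρ : 1 < ρ) (hv : ∀ t ∈ Icc (0:ℝ) 1, ‖v t‖ ≤ M)
    (hw : ∀ q m, m ≤ 2 ^ q → ‖coeff w q m‖ ≤ K / ρ ^ q) : ContinuousOn (para v w) (Icc 0 1) :=
  (tendstoUniformlyOn_tsum ((summable_geometric_of_lt_one (by positivity)
    (inv_lt_one_of_one_lt₀ hρ)).mul_left _)
    fun q _ ht => norm_paraTerm_le_geometric hv hw q ht).continuousOn
    (Filter.Frequently.of_forall fun _ =>
      (continuous_finsetSum _ fun q _ => continuous_paraTerm v w q).continuousOn)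

lemma sum_range_pow_div_pow_mul_le (hρ : 0 < ρ) (hρ4 : ρ < 4) (p : ℕ) :
    ∑ q ∈ Finset.range (p + 1), ρ ^ p / ρ ^ q * (4 ^ q / 4 ^ p) ≤ 4 / (4 - ρ) := by
  have hterm : ∀ q ∈ Finset.range (p + 1), ρ ^ p / ρ ^ q * (4 ^ q / 4 ^ p) = (ρ / 4) ^ (p - q) := by
    intro q hq
    obtain ⟨d, rfl⟩ := Nat.exists_eq_add_of_le (Finset.mem_range_succ_iff.1 hq)
    rw [Nat.add_sub_cancel_left, pow_add, pow_add, div_pow]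
    field_simp
  have hreflect := Finset.sum_range_reflect (fun j => (ρ / 4) ^ j) (p + 1)
  simp only [Nat.add_sub_cancel] at hreflect
  rw [Finset.sum_congr rfl hterm, hreflect, Finset.range_eq_Ico]
  calc _ ≤ (ρ / 4) ^ 0 / (1 - ρ / 4) := geom_sum_Ico_le_of_lt_one (by positivity) (by linarith)
    _ = 4 / (4 - ρ) := by rw [pow_zero]; field_simp

theorem norm_coeff_para_le [CompleteSpace E] [CompleteSpace F] (hρ : 1 < ρ) (hρ4 : ρ < 4)
    (hv : ∀ t ∈ Icc (0:ℝ) 1, ‖v t‖ ≤ M) (hw : ∀ q m, m ≤ 2 ^ q → ‖coeff w q m‖ ≤ K / ρ ^ q)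
    {p m : ℕ} (hm2 : m ≤ 2 ^ p) : ρ ^ p * ‖coeff (para v w) p m‖ ≤ (1 + 8 / (4 - ρ)) * M * K := by
  have hM : 0 ≤ M := (norm_nonneg _).trans (hv 0 (left_mem_Icc.2 zero_le_one))
  have hK : 0 ≤ K := by simpa using (norm_nonneg _).trans (hw 0 0 (Nat.zero_le _))
  have hsum : coeff (para v w) p m = ∑ q ∈ Finset.range (p + 1), coeff (paraTerm v w q) p m := by
    rw [show para v w = fun t => ∑' q, paraTerm v w q t from rfl,
      coeff_tsum (fun t ht => summable_paraTerm hρ hv hw ht) hm2]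
    exact tsum_eq_sum fun q hq => coeff_paraTerm_of_lt (by simpa using hq) m
  calc ρ ^ p * ‖coeff (para v w) p m‖
      ≤ ρ ^ p * ∑ q ∈ Finset.range (p + 1),
          ((if q = p then M * (K / ρ ^ q) else 0) + 2 * M * (K / ρ ^ q) * (4 ^ q / 4 ^ p)) := by
        rw [hsum]
        gcongr
        exact (norm_sum_le _ _).trans (Finset.sum_le_sum fun q hq =>
          norm_coeff_paraTerm_le hv (hw q) (Finset.mem_range_succ_iff.1 hq) hm2)
    _ = M * K + 2 * M * K * ∑ q ∈ Finset.range (p + 1), ρ ^ p / ρ ^ q * (4 ^ q / 4 ^ p) := by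
        rw [Finset.sum_add_distrib, Finset.sum_ite_eq', if_pos (Finset.self_mem_range_succ p),
          mul_add, Finset.mul_sum, Finset.mul_sum]
        congr 1
        · field_simp
        · exact Finset.sum_congr rfl fun q _ => by ring
    _ ≤ M * K + 2 * M * K * (4 / (4 - ρ)) := by
        gcongr
        exact sum_range_pow_div_pow_mul_le (by linarith) hρ4 p
    _ = (1 + 8 / (4 - ρ)) * M * K := by ring

end Sch

open Sch in
/-- The paraproduct `π_<(v,w) = ∑_{p≥0} S_{p-1}v Δ_p w` maps
`C([0,1], L(ℝ^d,ℝ^n)) × C^β(ℝ^d)` into `C^β(ℝ^n)` with `‖π_<(v,w)‖_β ≲ ‖v‖_∞ ‖w‖_β`. -/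
theorem paraproduct_bound (β : ℝ) (hβ0 : 0 < β) (hβ2 : β < 2) :
    ∃ C > (0:ℝ), ∀ (d n : ℕ)
      (v : ℝ → (EuclideanSpace ℝ (Fin d) →L[ℝ] EuclideanSpace ℝ (Fin n)))
      (w : ℝ → EuclideanSpace ℝ (Fin d)) (Mv Kw : ℝ),
      ContinuousOn v (Icc 0 1) → ContinuousOn w (Icc 0 1) →
      (∀ t ∈ Icc (0:ℝ) 1, ‖v t‖ ≤ Mv) → CoeffBound β w Kw →
      (∀ t ∈ Icc (0:ℝ) 1, Summable fun p : ℕ => (psum v p t) (block w (p + 1) t)) ∧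
      ContinuousOn (para v w) (Icc 0 1) ∧
      CoeffBound β (para v w) (C * Mv * Kw) := by
  set ρ : ℝ := 2 ^ β
  have hρ1 : 1 < ρ := Real.one_lt_rpow one_lt_two hβ0
  have hρ4 : ρ < 4 := by
    have h := Real.rpow_lt_rpow_of_exponent_lt one_lt_two hβ2
    rwa [Real.rpow_two, show (2:ℝ) ^ 2 = 4 by norm_num] at h
  have hpow : ∀ q : ℕ, (2:ℝ) ^ (β * q) = ρ ^ q := fun q => by
    rw [Real.rpow_mul zero_le_two, Real.rpow_natCast]
  refine ⟨1 + 8 / (4 - ρ), by positivity, fun d n v w Mv Kw _ _ hv hw => ?_⟩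
  have hw' : ∀ q m, m ≤ 2 ^ q → ‖coeff w q m‖ ≤ Kw / ρ ^ q := fun q m hm => by
    rw [le_div_iff₀ (by positivity), mul_comm, ← hpow]
    exact hw.2 q m hm
  refine ⟨fun t ht => summable_paraTerm hρ1 hv hw' ht, continuousOn_para hρ1 hv hw', ?_,
    fun p m hm => hpow p ▸ norm_coeff_para_le hρ1 hρ4 hv hw' hm⟩
  rw [para_apply_zero, norm_zero, mul_zero]
  have hMv : 0 ≤ Mv := (norm_nonneg _).trans (hv 0 (left_mem_Icc.2 zero_le_one))
  have hKw : 0 ≤ Kw := (mul_nonneg (by positivity) (norm_nonneg _)).trans hw.1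
  positivity
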